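/- Any tripartite correlation of the form P(abc|xyz) = Σ_λ q_λ P(a|x,ρ_A^λ)P(b|y,ρ_B^λ)P_λ(c|z), where Alice's and Bob's distributions arise from the fixed qubit measurements A₀=σₓ, A₁=σ_y, B₀=(σₓ−σ_y)/√2, B₁=(σₓ+σ_y)/√2 on single-qubit states ρ_A^λ, ρ_B^λ, and P_λ(c|z) are arbitrary conditional distributions, satisfies the Svetlichny expression bound ⟨S⟩ ≤ 2√2. -/

import Mathlib

open Matrix ComplexOrder

noncomputable def σx : Matrix (Fin 2) (Fin 2) ℂ := !![0, 1; 1, 0]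
noncomputable def σy : Matrix (Fin 2) (Fin 2) ℂ := !![0, -Complex.I; Complex.I, 0]

/-- Alice's observables: A₀ = σₓ, A₁ = σ_y. -/
noncomputable def Aobs : Fin 2 → Matrix (Fin 2) (Fin 2) ℂ := fun x => if x = 0 then σx else σy

/-- Bob's observables: B₀ = (σₓ − σ_y)/√2, B₁ = (σₓ + σ_y)/√2. -/
noncomputable def Bobs : Fin 2 → Matrix (Fin 2) (Fin 2) ℂ := fun y =>
  if y = 0 then (Real.sqrt 2 : ℂ)⁻¹ • (σx - σy) else (Real.sqrt 2 : ℂ)⁻¹ • (σx + σy)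

/-- The projector onto the `(-1)^a` eigenspace of a ±1-valued observable `O`. -/
noncomputable def proj (O : Matrix (Fin 2) (Fin 2) ℂ) (a : Fin 2) : Matrix (Fin 2) (Fin 2) ℂ :=
  (2 : ℂ)⁻¹ • (1 + ((-1 : ℂ) ^ (a : ℕ)) • O)

/-- The probability of outcome `a` when measuring observable `O` on qubit state `ρ`. -/
noncomputable def probOf (O : Matrix (Fin 2) (Fin 2) ℂ) (a : Fin 2)
    (ρ : Matrix (Fin 2) (Fin 2) ℂ) : ℝ := ((proj O a * ρ).trace).re

/-- The correlator ⟨A_x B_y C_z⟩ of a tripartite correlation `P`. -/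
noncomputable def corr (P : Fin 2 → Fin 2 → Fin 2 → Fin 2 → Fin 2 → Fin 2 → ℝ)
    (x y z : Fin 2) : ℝ :=
  ∑ a : Fin 2, ∑ b : Fin 2, ∑ c : Fin 2,
    (-1 : ℝ) ^ ((a + b + c : Fin 2) : ℕ) * P a b c x y z

/-- The Svetlichny expression of a tripartite correlation `P`. -/
noncomputable def Sexpr (P : Fin 2 → Fin 2 → Fin 2 → Fin 2 → Fin 2 → Fin 2 → ℝ) : ℝ :=
  corr P 0 0 1 + corr P 0 1 0 + corr P 1 0 0 - corr P 1 1 1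
    + corr P 0 1 1 + corr P 1 0 1 + corr P 1 1 0 - corr P 0 0 0

/-
Given λ the correlation is a product, so each correlator ⟨A_xB_yC_z⟩ is the `q`-average of
products α_x β_y γ_z of local correlators, and ⟨S⟩ is the average of a trilinear form in α, β, γ.
For a qubit state ⟨σₓ⟩² + ⟨σ_y⟩² ≤ 1, because det ρ ≥ 0 forces 4|ρ₀₁|² ≤ 4ρ₀₀ρ₁₁ ≤ (tr ρ)² = 1;
Bob's observables are (σₓ, σ_y) rotated by 45°, so the same bound holds for β. The trilinear
form equals γ₁X + γ₀Y with X² + Y² = 2|α|²|β|² ≤ 2, hence it is at most |X| + |Y| ≤ 2 ≤ 2√2.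
-/

def svetlichnyTrilinear (α β γ : Fin 2 → ℝ) : ℝ :=
  α 0 * β 0 * γ 1 + α 0 * β 1 * γ 0 + α 1 * β 0 * γ 0 - α 1 * β 1 * γ 1
    + α 0 * β 1 * γ 1 + α 1 * β 0 * γ 1 + α 1 * β 1 * γ 0 - α 0 * β 0 * γ 0

lemma svetlichnyTrilinear_le_two {α β γ : Fin 2 → ℝ} (hα : α 0 ^ 2 + α 1 ^ 2 ≤ 1)
    (hβ : β 0 ^ 2 + β 1 ^ 2 ≤ 1) (hγ : ∀ z, |γ z| ≤ 1) : svetlichnyTrilinear α β γ ≤ 2 := by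
  set X := α 0 * (β 0 + β 1) + α 1 * (β 0 - β 1)
  set Y := α 0 * (β 1 - β 0) + α 1 * (β 0 + β 1)
  have hS : svetlichnyTrilinear α β γ = γ 1 * X + γ 0 * Y := by
    rw [svetlichnyTrilinear]; ring
  have hXY : X ^ 2 + Y ^ 2 ≤ 2 :=
    calc X ^ 2 + Y ^ 2 = 2 * ((α 0 ^ 2 + α 1 ^ 2) * (β 0 ^ 2 + β 1 ^ 2)) := by ring
      _ ≤ 2 * (1 * 1) := by gcongr
      _ = 2 := by ring
  have hX : γ 1 * X ≤ |X| :=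
    (le_abs_self _).trans (by rw [abs_mul]; exact mul_le_of_le_one_left (abs_nonneg X) (hγ 1))
  have hY : γ 0 * Y ≤ |Y| :=
    (le_abs_self _).trans (by rw [abs_mul]; exact mul_le_of_le_one_left (abs_nonneg Y) (hγ 0))
  nlinarith [sq_abs X, sq_abs Y, sq_nonneg (|X| - |Y|)]

section HiddenVariableModel

variable {n : ℕ} {q : Fin n → ℝ} {pA pB pC : Fin n → Fin 2 → Fin 2 → ℝ}
  {P : Fin 2 → Fin 2 → Fin 2 → Fin 2 → Fin 2 → Fin 2 → ℝ}

lemma corr_eq_sum_of_eq_sum_mul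
    (hP : ∀ a b c x y z, P a b c x y z = ∑ l, q l * pA l a x * pB l b y * pC l c z)
    (x y z : Fin 2) :
    corr P x y z = ∑ l, q l * (pA l 0 x - pA l 1 x) * (pB l 0 y - pB l 1 y)
      * (pC l 0 z - pC l 1 z) := by
  simp only [corr, hP, Fin.sum_univ_two, Finset.mul_sum, ← Finset.sum_add_distrib]
  refine Finset.sum_congr rfl fun l _ => ?_
  simp only [Fin.isValue, Fin.reduceAdd, Fin.coe_ofNat_eq_mod, Nat.zero_mod, Nat.mod_succ,
    pow_zero, pow_one, one_mul, neg_mul, add_zero, zero_add]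
  ring

lemma Sexpr_eq_sum_svetlichnyTrilinear
    (hP : ∀ a b c x y z, P a b c x y z = ∑ l, q l * pA l a x * pB l b y * pC l c z) :
    Sexpr P = ∑ l, q l * svetlichnyTrilinear (fun x => pA l 0 x - pA l 1 x)
      (fun y => pB l 0 y - pB l 1 y) (fun z => pC l 0 z - pC l 1 z) := by
  simp only [Sexpr, corr_eq_sum_of_eq_sum_mul hP, svetlichnyTrilinear,
    ← Finset.sum_add_distrib, ← Finset.sum_sub_distrib]
  refine Finset.sum_congr rfl fun l _ => ?_
  ring

lemma Sexpr_le_two_of_eq_sum_mul (hq : ∀ l, 0 ≤ q l) (hq1 : ∑ l, q l = 1)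
    (hA : ∀ l, (pA l 0 0 - pA l 1 0) ^ 2 + (pA l 0 1 - pA l 1 1) ^ 2 ≤ 1)
    (hB : ∀ l, (pB l 0 0 - pB l 1 0) ^ 2 + (pB l 0 1 - pB l 1 1) ^ 2 ≤ 1)
    (hC : ∀ l z, |pC l 0 z - pC l 1 z| ≤ 1)
    (hP : ∀ a b c x y z, P a b c x y z = ∑ l, q l * pA l a x * pB l b y * pC l c z) :
    Sexpr P ≤ 2 :=
  calc Sexpr P = _ := Sexpr_eq_sum_svetlichnyTrilinear hP
    _ ≤ ∑ l, q l * 2 := Finset.sum_le_sum fun l _ =>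
      mul_le_mul_of_nonneg_left (svetlichnyTrilinear_le_two (hA l) (hB l) (hC l)) (hq l)
    _ = 2 := by rw [← Finset.sum_mul, hq1, one_mul]

end HiddenVariableModel

lemma abs_sub_le_one_of_sum_eq_one {p : Fin 2 → ℝ} (hp : ∀ c, 0 ≤ p c) (hp1 : ∑ c, p c = 1) :
    |p 0 - p 1| ≤ 1 := by
  rw [Fin.sum_univ_two] at hp1
  rw [abs_le]
  constructor <;> linarith [hp 0, hp 1]

lemma probOf_zero_sub_probOf_one (O ρ : Matrix (Fin 2) (Fin 2) ℂ) :
    probOf O 0 ρ - probOf O 1 ρ = (O * ρ).trace.re := by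
  have h : proj O 0 - proj O 1 = O := by
    simp only [proj, Fin.val_zero, Fin.val_one, pow_zero, pow_one, one_smul]
    module
  rw [probOf, probOf, ← Complex.sub_re, ← trace_sub, ← sub_mul, h]

lemma re_trace_σx_mul {ρ : Matrix (Fin 2) (Fin 2) ℂ} (hρ : ρ.IsHermitian) :
    (σx * ρ).trace.re = 2 * (ρ 0 1).re := by
  have h10 : ρ 1 0 = star (ρ 0 1) := (hρ.apply 1 0).symm
  simp [σx, trace_fin_two, vecMul, dotProduct, h10, ← two_mul]

lemma re_trace_σy_mul {ρ : Matrix (Fin 2) (Fin 2) ℂ} (hρ : ρ.IsHermitian) :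
    (σy * ρ).trace.re = -2 * (ρ 0 1).im := by
  have h10 : ρ 1 0 = star (ρ 0 1) := (hρ.apply 1 0).symm
  simp [σy, trace_fin_two, vecMul, dotProduct, h10, ← two_mul]

lemma Matrix.PosSemidef.four_mul_normSq_apply_zero_one_le {ρ : Matrix (Fin 2) (Fin 2) ℂ}
    (hρ : ρ.PosSemidef) (htr : ρ.trace = 1) : 4 * Complex.normSq (ρ 0 1) ≤ 1 := by
  have hdet : 0 ≤ (ρ 0 0 * ρ 1 1 - ρ 0 1 * star (ρ 0 1)).re := by
    have := (Complex.nonneg_iff.mp hρ.det_nonneg).1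
    rwa [det_fin_two, ← hρ.isHermitian.apply 1 0] at this
  obtain ⟨-, h00⟩ := Complex.nonneg_iff.mp (hρ.diag_nonneg (i := 0))
  obtain ⟨-, h11⟩ := Complex.nonneg_iff.mp (hρ.diag_nonneg (i := 1))
  have hsum : (ρ 0 0).re + (ρ 1 1).re = 1 := by
    simpa [trace_fin_two] using congrArg Complex.re htr
  rw [Complex.sub_re, Complex.mul_re, ← h00, ← h11, Complex.star_def,
    Complex.mul_conj, Complex.ofReal_re] at hdet
  nlinarith [sq_nonneg ((ρ 0 0).re - (ρ 1 1).re)]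

lemma Matrix.PosSemidef.re_trace_σx_mul_sq_add_re_trace_σy_mul_sq_le_one
    {ρ : Matrix (Fin 2) (Fin 2) ℂ} (hρ : ρ.PosSemidef) (htr : ρ.trace = 1) :
    (σx * ρ).trace.re ^ 2 + (σy * ρ).trace.re ^ 2 ≤ 1 := by
  have := hρ.four_mul_normSq_apply_zero_one_le htr
  rw [re_trace_σx_mul hρ.isHermitian, re_trace_σy_mul hρ.isHermitian]
  rw [Complex.normSq_apply] at this
  linarith

lemma re_trace_Bobs_mul_sq_add_sq (ρ : Matrix (Fin 2) (Fin 2) ℂ) :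
    (Bobs 0 * ρ).trace.re ^ 2 + (Bobs 1 * ρ).trace.re ^ 2
      = (σx * ρ).trace.re ^ 2 + (σy * ρ).trace.re ^ 2 := by
  simp only [Bobs, if_pos, one_ne_zero, if_false, smul_mul_assoc, trace_smul, sub_mul, add_mul,
    trace_sub, trace_add, ← Complex.ofReal_inv, smul_eq_mul, Complex.re_ofReal_mul,
    Complex.sub_re, Complex.add_re]
  have h2 : (√2)⁻¹ ^ 2 = (2 : ℝ)⁻¹ := by rw [inv_pow, Real.sq_sqrt zero_le_two]
  linear_combination (((σx * ρ).trace.re - (σy * ρ).trace.re) ^ 2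
    + ((σx * ρ).trace.re + (σy * ρ).trace.re) ^ 2) * h2

theorem stmt4 (n : ℕ) (q : Fin n → ℝ) (hq : ∀ l, 0 ≤ q l) (hq1 : ∑ l, q l = 1)
    (ρA ρB : Fin n → Matrix (Fin 2) (Fin 2) ℂ)
    (hρA : ∀ l, (ρA l).PosSemidef ∧ (ρA l).trace = 1)
    (hρB : ∀ l, (ρB l).PosSemidef ∧ (ρB l).trace = 1)
    (Pc : Fin n → Fin 2 → Fin 2 → ℝ)
    (hPc : ∀ l c z, 0 ≤ Pc l c z) (hPc1 : ∀ l z, ∑ c : Fin 2, Pc l c z = 1)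
    (P : Fin 2 → Fin 2 → Fin 2 → Fin 2 → Fin 2 → Fin 2 → ℝ)
    (hP : ∀ a b c x y z, P a b c x y z =
      ∑ l, q l * probOf (Aobs x) a (ρA l) * probOf (Bobs y) b (ρB l) * Pc l c z) :
    Sexpr P ≤ 2 * Real.sqrt 2 := by
  have hA : ∀ l, (probOf (Aobs 0) 0 (ρA l) - probOf (Aobs 0) 1 (ρA l)) ^ 2
      + (probOf (Aobs 1) 0 (ρA l) - probOf (Aobs 1) 1 (ρA l)) ^ 2 ≤ 1 := fun l => by
    simp only [probOf_zero_sub_probOf_one]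
    exact (hρA l).1.re_trace_σx_mul_sq_add_re_trace_σy_mul_sq_le_one (hρA l).2
  have hB : ∀ l, (probOf (Bobs 0) 0 (ρB l) - probOf (Bobs 0) 1 (ρB l)) ^ 2
      + (probOf (Bobs 1) 0 (ρB l) - probOf (Bobs 1) 1 (ρB l)) ^ 2 ≤ 1 := fun l => by
    simpa only [probOf_zero_sub_probOf_one, re_trace_Bobs_mul_sq_add_sq] using
      (hρB l).1.re_trace_σx_mul_sq_add_re_trace_σy_mul_sq_le_one (hρB l).2
  have hC : ∀ l z, |Pc l 0 z - Pc l 1 z| ≤ 1 := fun l z =>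
    abs_sub_le_one_of_sum_eq_one (hPc l · z) (hPc1 l z)
  calc Sexpr P ≤ 2 := Sexpr_le_two_of_eq_sum_mul hq hq1 hA hB hC hP
    _ ≤ 2 * Real.sqrt 2 := le_mul_of_one_le_right zero_le_two Real.one_lt_sqrt_two.le
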